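/- Let ψ₀ < ψ, where ψ₀ is the unique real root of ψ³−ψ−1=0, let φ_c = (1+ψ)/ψ², γ > 0 and τ > 0. Define ω(τ) = (ψ − φ_c)/(ψ + φ_c γ τ). Then 0 < ω(τ) < 1 and ψ(1+γτ)/(ψ + γ φ_c τ) = 1 + ω(τ) γ τ; consequently, for any τ' ≤ φ_c τ, ψ(1+γτ)/(ψ+γτ') ≥ 1 + ω(τ)γτ. -/

import Mathlib

/-! Since `x ↦ x ^ 3 - x` is increasing beyond the root `ψ₀ > 1`, the hypothesis `ψ₀ < ψ` gives
`ψ ^ 3 > ψ + 1`, i.e. `φ_c < ψ`, which is exactly what makes `ω` lie in `(0, 1)`. The identity is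
algebra, and the inequality follows because shrinking the denominator `ψ + γ τ'` enlarges the
quotient. -/

lemma one_lt_of_cube_sub_self_sub_one_eq_zero {x : ℝ} (hx : x ^ 3 - x - 1 = 0) : 1 < x := by
  nlinarith [sq_nonneg x, sq_nonneg (x - 1), sq_nonneg (x + 1)]

lemma cube_sub_self_sub_one_pos_of_lt {x y : ℝ} (hx : x ^ 3 - x - 1 = 0) (hxy : x < y) :
    0 < y ^ 3 - y - 1 := by
  have hx₁ := one_lt_of_cube_sub_self_sub_one_eq_zero hx
  have hfactor : y ^ 3 - y - 1 = (y - x) * (y ^ 2 + y * x + x ^ 2 - 1) := by linear_combination hx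
  rw [hfactor]
  exact mul_pos (sub_pos.mpr hxy) (by nlinarith)

lemma one_add_div_sq_lt_self {ψ : ℝ} (hψ : 0 < ψ) (h : 0 < ψ ^ 3 - ψ - 1) :
    (1 + ψ) / ψ ^ 2 < ψ := by
  rw [div_lt_iff₀ (by positivity)]
  linarith

section Omega

variable {ψ φ γ τ : ℝ}

lemma sub_div_add_mul_lt_one (hφ : 0 < φ) (hγτ : 0 ≤ γ * τ) (hden : 0 < ψ + φ * γ * τ) :
    (ψ - φ) / (ψ + φ * γ * τ) < 1 := by
  rw [div_lt_one hden]
  nlinarith [mul_nonneg hφ.le hγτ]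

lemma mul_one_add_div_eq (hden : ψ + φ * γ * τ ≠ 0) :
    ψ * (1 + γ * τ) / (ψ + γ * φ * τ) = 1 + (ψ - φ) / (ψ + φ * γ * τ) * γ * τ := by
  rw [show ψ + γ * φ * τ = ψ + φ * γ * τ by ring, eq_comm, div_mul_eq_mul_div, div_mul_eq_mul_div,
    one_add_div hden, div_left_inj' hden]
  ring

end Omega

theorem omega_properties (ψ₀ ψ γ τ : ℝ)
    (hroot : ψ₀ ^ 3 - ψ₀ - 1 = 0) (hψ : ψ₀ < ψ) (hγ : 0 < γ) (hτ : 0 < τ) :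
    let φc := (1 + ψ) / ψ ^ 2
    let ω := (ψ - φc) / (ψ + φc * γ * τ)
    0 < ω ∧ ω < 1 ∧
      ψ * (1 + γ * τ) / (ψ + γ * φc * τ) = 1 + ω * γ * τ ∧
      ∀ τ' : ℝ, 0 < τ' → τ' ≤ φc * τ →
        ψ * (1 + γ * τ) / (ψ + γ * τ') ≥ 1 + ω * γ * τ := by
  intro φc ω
  have hψpos : 0 < ψ := by linarith [one_lt_of_cube_sub_self_sub_one_eq_zero hroot]
  have hφc : 0 < φc := by positivity
  have hφcψ : φc < ψ := one_add_div_sq_lt_self hψpos (cube_sub_self_sub_one_pos_of_lt hroot hψ)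
  have hden : 0 < ψ + φc * γ * τ := by positivity
  have hidentity := mul_one_add_div_eq (γ := γ) (τ := τ) hden.ne'
  refine ⟨div_pos (sub_pos.mpr hφcψ) hden, sub_div_add_mul_lt_one hφc (by positivity) hden,
    hidentity, fun τ' hτ' hle => ?_⟩
  rw [ge_iff_le, ← hidentity]
  exact div_le_div_of_nonneg_left (by positivity) (by positivity)
    (by linarith [mul_le_mul_of_nonneg_left hle hγ.le])
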